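/- arXiv:1604.02711 — 4 statements merged into one kernel-verified Lean document; each statement's English description precedes it below -/
import Mathlib

section
/- For every reachable vertex v with v ≠ s, the set of proper dominators of v (dominators of v other than v itself) is totally ordered by the dominance relation; in particular, if u and w both properly dominate v, then u dominates w or w dominates u. -/
variable {V : Type*}

/-- `p` is a path (walk) in the digraph `E` from `a` to `b`, given as its list of vertices. -/
def IsPath (E : V → V → Prop) (a b : V) (p : List V) : Prop :=
  p.Chain' E ∧ p.head? = some a ∧ p.getLast? = some b

/-- `v` is reachable from `s` in the digraph `E`. -/
def Reach (E : V → V → Prop) (s v : V) : Prop := ∃ p, IsPath E s v p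

/-- `w` dominates `v` in the flow graph `(E, s)`. -/
def Dom (E : V → V → Prop) (s w v : V) : Prop :=
  Reach E s v ∧ ∀ p, IsPath E s v p → w ∈ p

/-- `dv` is the immediate dominator of `v`: `dv ≠ v`, `dv` dominates `v`, and every
proper dominator of `v` dominates `dv`. -/
def IsIdom (E : V → V → Prop) (s dv v : V) : Prop :=
  dv ≠ v ∧ Dom E s dv v ∧ ∀ u, Dom E s u v → u ≠ v → Dom E s u dv

/-- `u` is an ancestor of `w` in the tree given by parent function `parent` (reflexive). -/
def Anc (parent : V → V) (u w : V) : Prop := ∃ k, parent^[k] w = u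

/-- The tree with parent function `t` has the parent property for flow graph `(E, s)`. -/
def ParentProp (E : V → V → Prop) (s : V) (t : V → V) : Prop :=
  ∀ v w, E v w → Reach E s v → Anc t (t w) v

/-- The tree with parent function `t` has the sibling property for flow graph `(E, s)`. -/
def SiblingProp (E : V → V → Prop) (s : V) (t : V → V) : Prop :=
  ∀ v w, Reach E s v → Reach E s w → v ≠ s → w ≠ s → t v = t w → v ≠ w → ¬ Dom E s v w

/-- `t` is (the parent function of) a tree rooted at `s` on the reachable vertices. -/
def IsRootedTree (E : V → V → Prop) (s : V) (t : V → V) : Prop :=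
  t s = s ∧ ∀ v, Reach E s v → (v ≠ s → Reach E s (t v)) ∧ ∃ k, t^[k] v = s

/-! Fix a path from `s` to `v` and cut it at the last occurrence of `u`. If `w` does not occur in
the remaining tail, every path to `u` followed by that tail is a path to `v`, so it meets `w` before
reaching `u`: `w` dominates `u`. Otherwise the tail after the last `w` avoids `u`, and the same
argument shows that `u` dominates `w`. -/

lemma List.exists_eq_append_cons_notMem_right {α : Type*} {a : α} {l : List α} (h : a ∈ l) :
    ∃ l₁ l₂, l = l₁ ++ a :: l₂ ∧ a ∉ l₂ := by
  obtain ⟨l₁, l₂, hl, ha⟩ := List.eq_append_cons_of_mem (List.mem_reverse.mpr h)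
  refine ⟨l₂.reverse, l₁.reverse, ?_, by simpa using ha⟩
  simpa using congrArg List.reverse hl

section Paths

variable {E : V → V → Prop}

lemma isPath_append_cons_iff {a b c : V} {l₁ l₂ : List V} :
    IsPath E a b (l₁ ++ c :: l₂) ↔ IsPath E a c (l₁ ++ [c]) ∧ IsPath E c b (c :: l₂) := by
  have hhead : (l₁ ++ c :: l₂).head? = (l₁ ++ [c]).head? := by cases l₁ <;> rfl
  have hlast : (l₁ ++ c :: l₂).getLast? = (c :: l₂).getLast? :=
    List.getLast?_append_of_ne_nil _ (List.cons_ne_nil _ _)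
  unfold IsPath List.Chain'
  rw [List.isChain_split, hhead, hlast, List.getLast?_concat, List.head?_cons]
  tauto

lemma IsPath.append {a b c : V} {p l : List V} (hp : IsPath E a c p)
    (hl : IsPath E c b (c :: l)) : IsPath E a b (p ++ l) := by
  rw [← List.dropLast_append_getLast? c hp.2.2, List.append_assoc, List.singleton_append,
    isPath_append_cons_iff, List.dropLast_append_getLast? c hp.2.2]
  exact ⟨hp, hl⟩

lemma Dom.of_notMem_suffix {s u v w : V} {l₁ l₂ : List V} (hw : Dom E s w v)
    (hp : IsPath E s v (l₁ ++ u :: l₂)) (hwl : w ∉ l₂) : Dom E s w u := by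
  obtain ⟨hsu, huv⟩ := isPath_append_cons_iff.mp hp
  refine ⟨⟨_, hsu⟩, fun q hq => ?_⟩
  simpa [hwl] using hw.2 _ (hq.append huv)

end Paths

theorem proper_dominators_totally_ordered_general (E : V → V → Prop) (s v : V)
    (u w : V) (hu : Dom E s u v) (hw : Dom E s w v) :
    Dom E s u w ∨ Dom E s w u := by
  obtain ⟨p, hp⟩ := hu.1
  obtain ⟨l₁, l₂, rfl, hul₂⟩ := List.exists_eq_append_cons_notMem_right (hu.2 p hp)
  by_cases hwl₂ : w ∈ l₂
  · obtain ⟨m₁, m₂, rfl, -⟩ := List.exists_eq_append_cons_notMem_right hwl₂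
    refine Or.inl (hu.of_notMem_suffix (l₁ := l₁ ++ u :: m₁) (by simpa using hp) ?_)
    exact fun h => hul₂ (by simp [h])
  · exact Or.inr (hw.of_notMem_suffix hp hwl₂)

/-- The proper dominators of a reachable vertex `v ≠ s` are totally ordered by dominance. -/
theorem proper_dominators_totally_ordered (E : V → V → Prop) (s v : V)
    (hv : Reach E s v) (hvs : v ≠ s)
    (u w : V) (hu : Dom E s u v) (hune : u ≠ v) (hw : Dom E s w v) (hwne : w ≠ v) :
    Dom E s u w ∨ Dom E s w u :=
  proper_dominators_totally_ordered_general E s v u w hu hw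
end

section
/- Every reachable vertex v ≠ s of a flow graph has a unique immediate dominator: a vertex d(v) ≠ v that dominates v and is dominated by every proper dominator of v. -/
variable {V : Type*}

/-!
Fix a path `P` from `s` to `v`. Every proper dominator of `v` lies on `P`, and `s` is one of
them, so there is a proper dominator `d` occurring on `P` after which no proper dominator of `v`
occurs. It is the immediate dominator: a path from `s` to `d` avoiding another proper dominator `u`
could be continued along the tail of `P` after `d` to a path to `v` avoiding `u`. Uniqueness
follows from antisymmetry of dominance, seen by cutting a path at the first occurrence of a vertex.
-/

theorem List.exists_eq_append_cons_of_exists_mem {α : Type*} {p : α → Prop} {l : List α}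
    (h : ∃ x ∈ l, p x) : ∃ A d B, l = A ++ d :: B ∧ p d ∧ ∀ u ∈ B, ¬ p u := by
  induction l with
  | nil => simp at h
  | cons b l ih =>
    by_cases htail : ∃ x ∈ l, p x
    · obtain ⟨A, d, B, rfl, hd, hB⟩ := ih htail
      exact ⟨b :: A, d, B, rfl, hd, hB⟩
    · simp only [not_exists, not_and] at htail
      have hb : p b := by
        obtain ⟨x, hx, hpx⟩ := h
        rcases List.mem_cons.1 hx with rfl | hx
        · exact hpx
        · exact absurd hpx (htail x hx)
      exact ⟨[], b, l, rfl, hb, htail⟩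

namespace IsPath

variable {E : V → V → Prop} {a b w : V}

theorem head_mem {p : List V} (h : IsPath E a b p) : a ∈ p :=
  List.mem_of_mem_head? h.2.1

theorem concat_of_append_cons {A B : List V} (h : IsPath E a b (A ++ w :: B)) :
    IsPath E a w (A ++ [w]) := by
  obtain ⟨hchain, hhead, _⟩ := h
  refine ⟨hchain.prefix ⟨B, by simp⟩, ?_, List.getLast?_concat⟩
  cases A <;> simpa using hhead

theorem append_of_append_cons {a' : V} {Q A B : List V} (hQ : IsPath E a' w Q)
    (h : IsPath E a b (A ++ w :: B)) : IsPath E a' b (Q ++ B) := by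
  obtain ⟨hchain, _, hlast⟩ := h
  obtain ⟨Q', rfl⟩ : ∃ Q', Q = Q' ++ [w] :=
    ⟨Q.dropLast, (List.dropLast_append_getLast? w hQ.2.2).symm⟩
  refine ⟨?_, ?_, ?_⟩
  · exact hQ.1.append_overlap (hchain.suffix ⟨A, rfl⟩) (List.cons_ne_nil w [])
  · simpa [List.head?_append_of_ne_nil] using hQ.2.1
  · simpa [List.getLast?_append_cons] using hlast

end IsPath

section Dominance

variable {E : V → V → Prop} {s : V}

theorem dom_start {v : V} (hv : Reach E s v) : Dom E s s v :=
  ⟨hv, fun _ hp => hp.head_mem⟩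

theorem Dom.antisymm {u w : V} (huw : Dom E s u w) (hwu : Dom E s w u) : u = w := by
  by_contra hne
  obtain ⟨P, hP⟩ := huw.1
  obtain ⟨A, B, rfl, huA⟩ := List.eq_append_cons_of_mem (huw.2 P hP)
  have hwA : w ∈ A := by
    simpa [Ne.symm hne] using hwu.2 _ hP.concat_of_append_cons
  obtain ⟨C, D, rfl⟩ := List.append_of_mem hwA
  have hPw : IsPath E s w (C ++ [w]) :=
    IsPath.concat_of_append_cons (B := D ++ u :: B) (by simpa using hP)
  have huC : u ∈ C := by simpa [hne] using huw.2 _ hPw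
  exact huA (by simp [huC])

theorem isIdom_of_isPath_of_no_proper_dom_after {v d : V} {A B : List V}
    (hP : IsPath E s v (A ++ d :: B)) (hd : Dom E s d v) (hdv : d ≠ v)
    (hB : ∀ u ∈ B, ¬ (Dom E s u v ∧ u ≠ v)) :
    IsIdom E s d v := by
  refine ⟨hdv, hd, fun u hu huv => ⟨⟨_, hP.concat_of_append_cons⟩, fun Q hQ => ?_⟩⟩
  rcases List.mem_append.1 (hu.2 _ (hQ.append_of_append_cons hP)) with huQ | huB
  · exact huQ
  · exact absurd ⟨hu, huv⟩ (hB u huB)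

theorem IsIdom.unique {v d d' : V} (hd : IsIdom E s d v) (hd' : IsIdom E s d' v) : d = d' :=
  Dom.antisymm (hd'.2.2 d hd.2.1 hd.1) (hd.2.2 d' hd'.2.1 hd'.1)

end Dominance

/-- Every reachable vertex `v ≠ s` has a unique immediate dominator. -/
theorem idom_exists_unique (E : V → V → Prop) (s v : V)
    (hv : Reach E s v) (hvs : v ≠ s) :
    ∃! dv, IsIdom E s dv v := by
  obtain ⟨P, hP⟩ := hv
  obtain ⟨A, d, B, rfl, ⟨hd, hdv⟩, hB⟩ :=
    List.exists_eq_append_cons_of_exists_mem (p := fun u => Dom E s u v ∧ u ≠ v)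
      ⟨s, hP.head_mem, dom_start ⟨_, hP⟩, hvs.symm⟩
  have hidom := isIdom_of_isPath_of_no_proper_dom_after hP hd hdv hB
  exact ⟨d, hidom, fun _ hd' => hd'.unique hidom⟩
end

section
/- Let T be a rooted tree on the reachable vertices of a flow graph G with root s satisfying the parent property. If v is an ancestor of w in T and there is a path from v to w in G, then every vertex on any simple path from v to w in G is a descendant of v in T but not a proper descendant of w in T. -/
/-!
By the parent property, an edge `x → y` from a reachable `x` makes every proper ancestor of `y`
an ancestor of `t y`, hence of `x`; so tree ancestry propagates backwards along any path that
avoids the ancestor. Split the simple path at `u` into `v ⋯ u` and `u ⋯ w`, which share only `u`.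
Along the second piece, `v` (an ancestor of `w`) becomes an ancestor of `u`. Along the first, a
proper ancestor `w` of `u` would become an ancestor of `v`, hence equal to `v`, yet `v` lies on
the first piece and `w` does not.
-/

variable {V : Type*}

open Relation

section Paths

variable {E : V → V → Prop} {a b : V} {p : List V}

theorem not_isPath_nil : ¬ IsPath E a b [] := by
  simp [IsPath]

theorem IsPath.head_mem_s3 (h : IsPath E a b p) : a ∈ p :=
  List.mem_of_mem_head? h.2.1

theorem IsPath.last_mem (h : IsPath E a b p) : b ∈ p :=
  List.mem_of_getLast? h.2.2

theorem IsPath.head_induction_on {P : V → List V → Prop} (h : IsPath E a b p) (last : P b [b])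
    (cons : ∀ {x y q}, E x y → IsPath E y b (y :: q) → P y (y :: q) → P x (x :: y :: q)) :
    P a p := by
  induction p generalizing a with
  | nil => exact absurd h not_isPath_nil
  | cons x rest ih =>
    obtain ⟨hc, hh, hl⟩ := h
    obtain rfl : x = a := Option.some.inj hh
    cases rest with
    | nil =>
      obtain rfl : x = b := Option.some.inj hl
      exact last
    | cons y q =>
      have hy : IsPath E y b (y :: q) := ⟨(List.isChain_cons_cons.mp hc).2, rfl, hl⟩
      exact cons (List.isChain_cons_cons.mp hc).1 hy (ih hy)

theorem IsPath.reflTransGen (h : IsPath E a b p) : ReflTransGen E a b :=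
  h.head_induction_on (P := fun x _ => ReflTransGen E x b) ReflTransGen.refl
    fun hxy _ hy => ReflTransGen.head hxy hy

theorem reach_iff_reflTransGen : Reach E a b ↔ ReflTransGen E a b := by
  refine ⟨fun ⟨_, hp⟩ => hp.reflTransGen, fun h => ?_⟩
  obtain ⟨l, hc, hl⟩ := List.exists_isChain_cons_of_relationReflTransGen h
  exact ⟨a :: l, hc, rfl, by rw [List.getLast?_eq_some_getLast (List.cons_ne_nil a l), hl]⟩

theorem Reach.trans_isPath {s : V} (ha : Reach E s a) (hp : IsPath E a b p) : Reach E s b :=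
  reach_iff_reflTransGen.2 ((reach_iff_reflTransGen.1 ha).trans hp.reflTransGen)

theorem Reach.tail {s : V} (ha : Reach E s a) (e : E a b) : Reach E s b :=
  reach_iff_reflTransGen.2 ((reach_iff_reflTransGen.1 ha).tail e)

theorem IsPath.prefix {u : V} {p₁ p₂ : List V} (h : IsPath E a b (p₁ ++ u :: p₂)) :
    IsPath E a u (p₁ ++ [u]) := by
  refine ⟨h.1.prefix ⟨p₂, by simp⟩, ?_, by simp⟩
  cases p₁ <;> simpa using h.2.1

theorem IsPath.suffix {u : V} {p₁ p₂ : List V} (h : IsPath E a b (p₁ ++ u :: p₂)) :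
    IsPath E u b (u :: p₂) :=
  ⟨h.1.suffix ⟨p₁, rfl⟩, rfl, by simpa [List.getLast?_append_of_ne_nil] using h.2.2⟩

end Paths

theorem List.Nodup.eq_of_mem_prefix_of_mem_suffix {α : Type*} {x u : α} {l₁ l₂ : List α}
    (hnd : (l₁ ++ u :: l₂).Nodup) (h₁ : x ∈ l₁ ++ [u]) (h₂ : x ∈ u :: l₂) : x = u := by
  rcases List.mem_append.mp h₁ with h | h
  · exact absurd h₂ (List.disjoint_of_nodup_append hnd h)
  · exact List.mem_singleton.mp h

section Ancestors

variable {t : V → V} {a b c : V}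

theorem Anc.refl (a : V) : Anc t a a := ⟨0, rfl⟩

theorem Anc.trans (hab : Anc t a b) (hbc : Anc t b c) : Anc t a c := by
  obtain ⟨k, rfl⟩ := hab
  obtain ⟨j, rfl⟩ := hbc
  exact ⟨k + j, Function.iterate_add_apply t k j c⟩

theorem Anc.of_parent (h : Anc t a b) (hne : a ≠ b) : Anc t a (t b) := by
  obtain ⟨_ | k, hk⟩ := h
  · exact absurd hk.symm hne
  · exact ⟨k, hk⟩

/-- In a tree the only cycle of the parent function is the fixed root, so ancestry is
antisymmetric below it. -/
theorem Anc.antisymm {s : V} (hs : t s = s) {m : ℕ} (hm : t^[m] a = s)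
    (hab : Anc t a b) (hba : Anc t b a) : a = b := by
  obtain ⟨k, hk⟩ := hab
  obtain ⟨j, hj⟩ := hba
  rcases Nat.eq_zero_or_pos (k + j) with h0 | hpos
  · obtain ⟨rfl, rfl⟩ : k = 0 ∧ j = 0 := by omega
    exact hk.symm
  have hper : Function.IsPeriodicPt t (k + j) a := by
    rw [Function.IsPeriodicPt, Function.IsFixedPt, Function.iterate_add_apply, hj, hk]
  have has : a = s := by
    have := (hper.mul_const m).eq
    rw [← Nat.sub_add_cancel (Nat.le_mul_of_pos_left m hpos), Function.iterate_add_apply, hm,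
      Function.iterate_fixed hs] at this
    exact this.symm
  rw [← hj, has, Function.iterate_fixed hs]

end Ancestors

section ParentProperty

variable {E : V → V → Prop} {s : V} {t : V → V}

theorem ParentProp.anc_of_edge (hpp : ParentProp E s t) {x y c : V} (e : E x y)
    (hx : Reach E s x) (hcy : Anc t c y) (hne : c ≠ y) : Anc t c x :=
  (hcy.of_parent hne).trans (hpp x y e hx)

theorem ParentProp.anc_of_isPath (hpp : ParentProp E s t) {a b c : V} {p : List V}
    (hp : IsPath E a b p) (ha : Reach E s a) (hcb : Anc t c b) (hc : c ∉ p) : Anc t c a := by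
  refine hp.head_induction_on (P := fun x q => Reach E s x → c ∉ q → Anc t c x)
    (fun _ _ => hcb) (fun e _ ih hx hc => ?_) ha hc
  refine hpp.anc_of_edge e hx (ih (hx.tail e) fun h => hc (List.mem_cons_of_mem _ h)) ?_
  rintro rfl
  exact hc (by simp)

end ParentProperty

theorem parent_property_path_general (E : V → V → Prop) (s : V) (t : V → V)
    (ht : IsRootedTree E s t) (hpp : ParentProp E s t)
    (v w : V) (hv : Reach E s v) (hanc : Anc t v w) :
    ∀ p, IsPath E v w p → p.Nodup → ∀ u ∈ p, Anc t v u ∧ ¬ (Anc t w u ∧ u ≠ w) := by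
  intro p hp hnd u hu
  obtain ⟨p₁, p₂, rfl⟩ := List.append_of_mem hu
  have hpre : IsPath E v u (p₁ ++ [u]) := hp.prefix
  have hsuf : IsPath E u w (u :: p₂) := hp.suffix
  refine ⟨?_, fun ⟨hwu, hne⟩ => ?_⟩
  · by_cases hvs : v ∈ u :: p₂
    · rw [hnd.eq_of_mem_prefix_of_mem_suffix hpre.head_mem_s3 hvs]
      exact Anc.refl u
    · exact hpp.anc_of_isPath hsuf (hv.trans_isPath hpre) hanc hvs
  · have hwp : w ∉ p₁ ++ [u] := fun h =>
      hne (hnd.eq_of_mem_prefix_of_mem_suffix h hsuf.last_mem).symm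
    have hwv : Anc t w v := hpp.anc_of_isPath hpre hv hwu hwp
    obtain ⟨m, hm⟩ := (ht.2 v hv).2
    exact hwp (Anc.antisymm ht.1 hm hanc hwv ▸ hpre.head_mem_s3)

/-- If a tree `t` rooted at `s` has the parent property, `v` is an ancestor of `w` in `t`,
and there is a path from `v` to `w` in `G`, then every vertex on any simple path from
`v` to `w` in `G` is a descendant of `v` but not a proper descendant of `w` in `t`. -/
theorem parent_property_path (E : V → V → Prop) (s : V) (t : V → V)
    (ht : IsRootedTree E s t) (hpp : ParentProp E s t)
    (v w : V) (hv : Reach E s v) (hw : Reach E s w) (hanc : Anc t v w)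
    (hpath : ∃ p, IsPath E v w p) :
    ∀ p, IsPath E v w p → p.Nodup → ∀ u ∈ p, Anc t v u ∧ ¬ (Anc t w u ∧ u ≠ w) :=
  parent_property_path_general E s t ht hpp v w hv hanc
end

section
/- If a tree T rooted at s on the reachable vertices of a flow graph G satisfies the parent property, then for every reachable vertex v ≠ s, the parent t(v) of v in T dominates v in G. -/
/-!
Let `u` be a tree ancestor of `v` and let `p` be a path from `s` to `v` avoiding `u`. The parent
property says that the tree parent of the head of an edge is an ancestor of its tail, so a
path edge can enter the subtree of `u` only through `u` itself. The path starts outside that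
subtree (at the root `s`), hence never reaches `v`, a contradiction. So every tree ancestor
of `v`, in particular its parent, dominates `v`.
-/

variable {V : Type*}

lemma reach_self (E : V → V → Prop) (s : V) : Reach E s s :=
  ⟨[s], List.isChain_singleton s, rfl, rfl⟩

lemma Reach.step {E : V → V → Prop} {s a b : V} (h : Reach E s a) (hab : E a b) :
    Reach E s b := by
  obtain ⟨p, hchain, hhead, hlast⟩ := h
  refine ⟨p ++ [b], ?_, by simp [List.head?_append, hhead], by simp⟩
  refine List.isChain_append.mpr ⟨hchain, List.isChain_singleton b, ?_⟩
  rintro x hx y ⟨⟩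
  rw [hlast, Option.mem_some_iff] at hx
  exact hx ▸ hab

namespace Anc

variable {t : V → V} {u v w : V}

lemma parent (t : V → V) (v : V) : Anc t (t v) v := ⟨1, rfl⟩

lemma trans_s4 (huv : Anc t u v) (hvw : Anc t v w) : Anc t u w := by
  obtain ⟨m, rfl⟩ := huv
  obtain ⟨n, rfl⟩ := hvw
  exact ⟨m + n, Function.iterate_add_apply t m n w⟩

lemma anc_parent (h : Anc t u v) (hvu : v ≠ u) : Anc t u (t v) := by
  obtain ⟨_ | k, rfl⟩ := h
  · exact absurd rfl hvu
  · exact ⟨k, rfl⟩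

lemma eq_of_isFixedPt (h : Anc t u v) (hv : Function.IsFixedPt t v) : u = v := by
  obtain ⟨k, rfl⟩ := h
  exact Function.iterate_fixed hv k

end Anc

namespace ParentProp

variable {E : V → V → Prop} {s : V} {t : V → V}

lemma not_anc_of_edge (hpp : ParentProp E s t) {u a b : V} (hab : E a b) (ha : Reach E s a)
    (hua : ¬ Anc t u a) (hbu : b ≠ u) : ¬ Anc t u b :=
  fun hub => hua ((hub.anc_parent hbu).trans_s4 (hpp a b hab ha))

lemma dom_of_anc (hroot : t s = s) (hpp : ParentProp E s t) {u v : V} (hv : Reach E s v)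
    (huv : Anc t u v) : Dom E s u v := by
  refine ⟨hv, fun p ⟨hchain, hhead, hlast⟩ => ?_⟩
  by_contra hup
  have hus : u ≠ s := fun h => hup (h ▸ List.mem_of_head? hhead)
  -- Restricting to edges not entering `u` makes "reachable and outside the subtree of `u`"
  -- an invariant along `p`.
  have hchain' : p.IsChain (fun a b => E a b ∧ b ≠ u) :=
    hchain.imp_of_mem_imp fun _ b _ hb hab => ⟨hab, fun h => hup (h ▸ hb)⟩
  have houtside := hchain'.induction (fun x => Reach E s x ∧ ¬ Anc t u x) p
    (fun a b ⟨hab, hbu⟩ ⟨ha, hua⟩ => ⟨ha.step hab, hpp.not_anc_of_edge hab ha hua hbu⟩)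
    (fun hne => by
      rw [(List.head_eq_iff_head?_eq_some hne).mpr hhead]
      exact ⟨reach_self E s, fun h => hus (h.eq_of_isFixedPt hroot)⟩)
  exact (houtside v (List.mem_of_getLast? hlast)).2 huv

end ParentProp

theorem parent_property_parent_dominates_general (E : V → V → Prop) (s : V) (t : V → V)
    (ht : IsRootedTree E s t) (hpp : ParentProp E s t)
    (v : V) (hv : Reach E s v) :
    Dom E s (t v) v :=
  hpp.dom_of_anc ht.1 hv (Anc.parent t v)

/-- If a tree `t` rooted at `s` on the reachable vertices has the parent property,
then the parent of every reachable vertex `v ≠ s` dominates `v`. -/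
theorem parent_property_parent_dominates (E : V → V → Prop) (s : V) (t : V → V)
    (ht : IsRootedTree E s t) (hpp : ParentProp E s t)
    (v : V) (hv : Reach E s v) (hvs : v ≠ s) :
    Dom E s (t v) v :=
  parent_property_parent_dominates_general E s t ht hpp v hv
end
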